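/- arXiv:0809.5031 — 5 statements merged into one kernel-verified Lean document; each statement's English description precedes it below -/
import Mathlib

section
/- Let $F$ be a totally real number field of degree $d$ and fix $\delta > 0$. Then the sum over all totally positive units $\eta \in \mathcal{O}_F^{\times+}$ of $\prod_{j : |\eta^{(j)}| > 1} |\eta^{(j)}|^{-\delta}$ converges. -/
/-!
Write `L(η) = ∑_j (log η^{(j)})⁺`, so that the term of `η` is `exp (-δ L(η))`. Since
`∑_j log η^{(j)} = log |N η| = 0`, we get `∑_j |log η^{(j)}| = 2 L(η)`, which bounds the sup norm
of the logarithmic embedding `ℓ(η)`; hence the term is at most `exp (-(δ/2) ‖ℓ(η)‖)`. On totally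
positive units `ℓ` is injective, the only totally positive root of unity being `1`, and
`exp (-c ‖x‖)` is summable over any lattice because it is `O(‖x‖^{-(rank + 1)})`.
-/

open Filter Real NumberField NumberField.InfinitePlace NumberField.Units
open NumberField.Units.dirichletUnitTheorem

theorem Real.ite_one_lt_rpow_eq_exp_mul_posPart_log {t : ℝ} (ht : 0 < t) (r : ℝ) :
    (if 1 < t then t ^ r else 1) = exp (r * (log t)⁺) := by
  split_ifs with h
  · rw [posPart_eq_self.mpr (log_nonneg h.le), rpow_def_of_pos ht, mul_comm]
  · rw [posPart_eq_zero.mpr (log_nonpos ht.le (not_lt.mp h)), mul_zero, exp_zero]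

theorem ZLattice.summable_exp_neg_mul_norm {E : Type*} [NormedAddCommGroup E] [NormedSpace ℝ E]
    [FiniteDimensional ℝ E] (L : Submodule ℤ E) [DiscreteTopology L] {c : ℝ} (hc : 0 < c) :
    Summable fun x : L ↦ exp (-c * ‖x‖) := by
  set n := Module.finrank ℤ L + 1
  refine .of_norm_bounded_eventually ((summable_norm_pow_inv L n
    (Module.finrank ℤ L).lt_add_one).mul_left (n.factorial / c ^ n)) ?_
  filter_upwards [eventually_cofinite_ne 0] with x hx
  have hcx : 0 < c * ‖x‖ := mul_pos hc (norm_pos_iff.mpr hx)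
  calc ‖exp (-c * ‖x‖)‖ = (exp (c * ‖x‖))⁻¹ := by
        rw [norm_of_nonneg (exp_pos _).le, neg_mul, exp_neg]
    _ ≤ ((c * ‖x‖) ^ n / n.factorial)⁻¹ :=
        inv_anti₀ (by positivity) (pow_div_factorial_le_exp _ hcx.le n)
    _ = n.factorial / c ^ n * ‖x‖⁻¹ ^ n := by rw [inv_div, mul_pow, inv_pow]; ring

namespace NumberField

variable {K : Type*} [Field K]

theorem isTotallyReal_of_forall_im_eq_zero (h : ∀ φ : K →+* ℂ, ∀ x, (φ x).im = 0) :
    IsTotallyReal K :=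
  ⟨fun _ ↦ isReal_iff.mpr <| ComplexEmbedding.isReal_iff.mpr <|
    RingHom.ext fun x ↦ Complex.ext rfl (by simp [h])⟩

namespace InfinitePlace

theorem mk_ofRealHom_comp_apply (j : K →+* ℝ) (x : K) :
    mk (Complex.ofRealHom.comp j) x = |j x| := by
  rw [apply, RingHom.comp_apply, Complex.ofRealHom_eq_coe, Complex.norm_real, norm_eq_abs]

theorem bijective_mk_ofRealHom_comp [IsTotallyReal K] :
    Function.Bijective fun j : K →+* ℝ ↦ mk (Complex.ofRealHom.comp j) := by
  refine ⟨fun j j' h ↦ ?_, fun w ↦ ⟨embedding_of_isReal (IsTotallyReal.isReal w), ?_⟩⟩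
  · have hconj : ComplexEmbedding.conjugate (Complex.ofRealHom.comp j) =
        Complex.ofRealHom.comp j :=
      RingHom.ext fun x ↦ by simp
    have h' : Complex.ofRealHom.comp j = Complex.ofRealHom.comp j' := by
      simpa [mk_eq_iff, hconj] using h
    exact RingHom.ext fun x ↦ Complex.ofReal_injective (RingHom.congr_fun h' x)
  · conv_rhs => rw [← mk_embedding w]
    exact congrArg mk (RingHom.ext (embedding_of_isReal_apply _))

theorem sum_realEmbedding_eq_sum [NumberField K] [IsTotallyReal K] {M : Type*}
    [AddCommMonoid M] (f : ℝ → M) (x : K) :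
    ∑ j : K →+* ℝ, f |j x| = ∑ w : InfinitePlace K, f (w x) := by
  simp_rw [← mk_ofRealHom_comp_apply]
  exact bijective_mk_ofRealHom_comp.sum_comp fun w ↦ f (w x)

end InfinitePlace

namespace Units

variable [NumberField K]

theorem sum_mult_mul_abs_log (u : (𝓞 K)ˣ) :
    ∑ w : InfinitePlace K, mult w * |log (w u)| =
      2 * ∑ w : InfinitePlace K, mult w * (log (w u))⁺ := by
  have habs (a : ℝ) : |a| = 2 * a⁺ - a := by
    linarith [posPart_add_negPart a, posPart_sub_negPart a]
  calc ∑ w : InfinitePlace K, mult w * |log (w u)|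
      = ∑ w : InfinitePlace K, (2 * (mult w * (log (w u))⁺) - mult w * log (w u)) :=
        Finset.sum_congr rfl fun w _ ↦ by rw [habs]; ring
    _ = 2 * ∑ w : InfinitePlace K, mult w * (log (w u))⁺ := by
        rw [Finset.sum_sub_distrib, sum_mult_mul_log, sub_zero, Finset.mul_sum]

open scoped Classical in
theorem norm_logEmbedding_le (u : (𝓞 K)ˣ) :
    ‖logEmbedding K (Additive.ofMul u)‖ ≤ 2 * ∑ w : InfinitePlace K, mult w * (log (w u))⁺ := by
  rw [← sum_mult_mul_abs_log]
  refine (pi_norm_le_iff_of_nonneg (Finset.sum_nonneg fun w _ ↦ by positivity)).mpr fun w ↦ ?_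
  rw [logEmbedding_component, norm_mul, Real.norm_natCast, norm_eq_abs]
  exact Finset.single_le_sum (f := fun w : InfinitePlace K ↦ (mult w : ℝ) * |log (w u)|)
    (fun _ _ ↦ by positivity) (Finset.mem_univ w.1)

theorem eq_one_of_mem_torsion_of_pos {ζ : (𝓞 K)ˣ} (hζ : ζ ∈ torsion K) {j : K →+* ℝ}
    (hj : 0 < j ζ) : ζ = 1 := by
  have h := (mem_torsion K).mp hζ (InfinitePlace.mk (Complex.ofRealHom.comp j))
  rw [mk_ofRealHom_comp_apply, abs_of_pos hj, ← map_one j] at h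
  exact Units.ext (RingOfIntegers.coe_injective (j.injective h))

theorem injOn_logEmbedding_of_pos (j : K →+* ℝ) :
    Set.InjOn (fun u : (𝓞 K)ˣ ↦ logEmbedding K (Additive.ofMul u)) {u | 0 < j u} := by
  intro u hu v hv h
  have hζ : u * v⁻¹ ∈ torsion K := by
    rw [← logEmbedding_eq_zero_iff, ofMul_mul, map_add, ofMul_inv, map_neg]
    exact sub_eq_zero.mpr h
  have hpos : 0 < j ((u * v⁻¹ : (𝓞 K)ˣ) : K) := by
    simpa using mul_pos hu (inv_pos.mpr hv)
  exact mul_inv_eq_one.mp (eq_one_of_mem_torsion_of_pos hζ hpos)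

open scoped Classical in
theorem prod_ite_one_lt_abs_rpow_neg_le [IsTotallyReal K] {δ : ℝ} (hδ : 0 ≤ δ) (u : (𝓞 K)ˣ) :
    ∏ j : K →+* ℝ, (if 1 < |j u| then |j u| ^ (-δ) else 1) ≤
      exp (-(δ / 2) * ‖logEmbedding K (Additive.ofMul u)‖) := by
  have hpos (j : K →+* ℝ) : 0 < |j u| := abs_pos.mpr ((map_ne_zero j).mpr (coe_ne_zero u))
  simp_rw [ite_one_lt_rpow_eq_exp_mul_posPart_log (hpos _), ← exp_sum, ← Finset.mul_sum,
    sum_realEmbedding_eq_sum (fun t ↦ (log t)⁺)]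
  have := norm_logEmbedding_le u
  simp only [IsTotallyReal.mult_eq, Nat.cast_one, one_mul] at this
  exact exp_le_exp.mpr (by nlinarith)

end Units

end NumberField

/-- For a totally real number field `F` and `δ > 0`, the sum over totally positive units
`η` of `∏_{j : |η^{(j)}| > 1} |η^{(j)}|^{-δ}` converges. -/
theorem stmt_1 (F : Type*) [Field F] [NumberField F]
    (htr : ∀ φ : F →+* ℂ, ∀ x : F, (φ x).im = 0) (δ : ℝ) (hδ : 0 < δ) :
    Summable (fun η : {u : (NumberField.RingOfIntegers F)ˣ //
        ∀ j : F →+* ℝ, 0 < j (algebraMap (NumberField.RingOfIntegers F) F u)} =>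
      ∏ j : F →+* ℝ,
        if 1 < |j (algebraMap (NumberField.RingOfIntegers F) F (η : (NumberField.RingOfIntegers F)ˣ))|
        then |j (algebraMap (NumberField.RingOfIntegers F) F (η : (NumberField.RingOfIntegers F)ˣ))| ^ (-δ)
        else 1) := by
  classical
  have := isTotallyReal_of_forall_im_eq_zero htr
  obtain ⟨j₀⟩ := bijective_mk_ofRealHom_comp.surjective.nonempty (α := F →+* ℝ)
  let Φ (η : {u : (𝓞 F)ˣ // ∀ j : F →+* ℝ, 0 < j u}) : unitLattice F :=
    ⟨logEmbedding F (Additive.ofMul η.1), Submodule.mem_map_of_mem Submodule.mem_top⟩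
  have hΦ : Function.Injective Φ := fun η η' h ↦
    Subtype.ext (injOn_logEmbedding_of_pos j₀ (η.2 j₀) (η'.2 j₀) (congrArg Subtype.val h))
  have hlattice :=
    (ZLattice.summable_exp_neg_mul_norm (unitLattice F) (half_pos hδ)).comp_injective hΦ
  exact .of_nonneg_of_le (fun η ↦ Finset.prod_nonneg fun j _ ↦ by split_ifs <;> positivity)
    (fun η ↦ prod_ite_one_lt_abs_rpow_neg_le hδ.le η.1) hlattice
end

section
/- Let $x > 0$ with $x \neq 1$, let $k \ge 1$ be an integer and $c > 0$. Then $\frac{1}{2\pi i}\int_{(c)} x^{s} \frac{k!}{s^{k+1}} \, ds = (\log x)^k$ if $x > 1$ and $= 0$ if $0 < x < 1$. Consequently, for a polynomial $P = \sum_k a_k X^k$ with $P(0)=0$, setting $\widehat{P_M}(s) = \sum_k a_k k! (s \log M)^{-k}$, one has for every $M > 1$ not an integer and every positive integer $m$: $\frac{1}{2\pi i}\int_{(1)} \left(\frac{M}{m}\right)^{s} \widehat{P_M}(s) \frac{ds}{s} = P\!\left(\frac{\log(M/m)}{\log M}\right) \mathbb{1}_{m < M}$. -/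
/-!
Substituting `x = e^{-u}` turns the inverse Mellin transform along `Re s = c` into an inverse
Fourier transform, and `k! / (c + 2πiξ)^(k+1)` is the Fourier transform of `u₊^k e^{-cu}`
(a Laplace integral, computed by integrating by parts `k` times). For `k ≥ 1` this function is
continuous and its transform is integrable, so Fourier inversion at `u = log x` yields
`(log x)₊^k`. The polynomial identity follows term by term; the `k = 0` term, whose integral does
not converge, is absent because `P(0) = 0`.
-/

open Complex MeasureTheory Set Filter
open scoped Real Topology FourierTransform Nat Polynomial

section Laplace

variable {s : ℂ}

theorem integrableOn_pow_mul_cexp_neg_mul_Ioi (hs : 0 < s.re) (k : ℕ) :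
    IntegrableOn (fun u : ℝ => (u : ℂ) ^ k * cexp (-s * u)) (Ioi 0) := by
  refine Integrable.mono' (integrableOn_rpow_mul_exp_neg_mul_rpow (s := k) (p := 1)
    (by linarith [k.cast_nonneg (α := ℝ)]) one_pos hs) (by fun_prop) ?_
  filter_upwards [ae_restrict_mem measurableSet_Ioi] with u (hu : 0 < u)
  simp [norm_exp, abs_of_pos hu]

theorem tendsto_pow_mul_cexp_neg_mul_atTop (hs : 0 < s.re) (k : ℕ) :
    Tendsto (fun u : ℝ => (u : ℂ) ^ k * cexp (-s * u)) atTop (𝓝 0) := by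
  rw [tendsto_zero_iff_norm_tendsto_zero]
  refine (tendsto_rpow_mul_exp_neg_mul_atTop_nhds_zero k s.re hs).congr' ?_
  filter_upwards [eventually_ge_atTop 0] with u hu
  simp [norm_exp, abs_of_nonneg hu]

theorem integral_pow_mul_cexp_neg_mul_Ioi (hs : 0 < s.re) (k : ℕ) :
    ∫ u in Ioi (0 : ℝ), (u : ℂ) ^ k * cexp (-s * u) = k ! / s ^ (k + 1) := by
  have hs0 : s ≠ 0 := by rintro rfl; simp at hs
  induction k with
  | zero =>
    simpa [div_neg, neg_div] using integral_exp_mul_complex_Ioi (a := -s) (by simpa using hs) 0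
  | succ k ih =>
    have hu (t : ℝ) : HasDerivAt (fun t : ℝ => (t : ℂ) ^ (k + 1)) ((k + 1) * (t : ℂ) ^ k) t := by
      simpa using (hasDerivAt_pow (k + 1) (t : ℂ)).comp_ofReal
    have hv (t : ℝ) : HasDerivAt (fun t : ℝ => -cexp (-s * t) / s) (cexp (-s * t)) t := by
      have := (((hasDerivAt_id (t : ℂ)).const_mul (-s)).cexp.comp_ofReal).div_const (-s)
      simpa [div_neg, neg_div, mul_div_assoc, hs0] using this
    have hparts := integral_Ioi_mul_deriv_eq_deriv_mul (fun t _ => hu t) (fun t _ => hv t)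
      (integrableOn_pow_mul_cexp_neg_mul_Ioi hs (k + 1))
      (IntegrableOn.congr_fun
        ((integrableOn_pow_mul_cexp_neg_mul_Ioi hs k).const_mul (-(k + 1) / s))
        (fun t _ => by simp only [Pi.mul_apply]; ring) measurableSet_Ioi)
      (a' := 0) (b' := 0) ?_ ?_
    · have hrhs : ∫ t in Ioi (0 : ℝ), (k + 1) * (t : ℂ) ^ k * (-cexp (-s * t) / s) =
          -(k + 1) / s * ∫ t in Ioi (0 : ℝ), (t : ℂ) ^ k * cexp (-s * t) := by
        rw [← integral_const_mul]
        congr 1 with t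
        ring
      rw [hparts, hrhs, ih, Nat.factorial_succ]
      push_cast
      field_simp
      ring
    · have hcont : Continuous fun t : ℝ => (t : ℂ) ^ (k + 1) * (-cexp (-s * t) / s) := by
        fun_prop
      simpa [Pi.mul_def] using (hcont.tendsto 0).mono_left nhdsWithin_le_nhds
    · simpa [Pi.mul_def, neg_div, mul_div_assoc] using
        ((tendsto_pow_mul_cexp_neg_mul_atTop hs (k + 1)).div_const s).neg

end Laplace

theorem integrable_inv_pow_ofReal_add_mul_I {c : ℝ} (hc : c ≠ 0) {n : ℕ} (hn : 2 ≤ n) :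
    Integrable fun t : ℝ => (((c : ℂ) + t * I) ^ n)⁻¹ := by
  have hc' : 0 < |c| := abs_pos.2 hc
  refine ((integrable_one_add_norm (E := ℝ) (μ := volume) (r := n) (by simp; norm_cast))
    |>.const_mul ((1 + |c|⁻¹) ^ n)).mono' (by fun_prop) (.of_forall fun t => ?_)
  set z : ℂ := c + t * I
  have hz : 0 < ‖z‖ := hc'.trans_le (by simpa [z] using abs_re_le_norm z)
  have hbound : 1 + |t| ≤ (1 + |c|⁻¹) * ‖z‖ := by
    have h1 : |t| ≤ ‖z‖ := by simpa [z] using abs_im_le_norm z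
    have h2 : |c| ≤ ‖z‖ := by simpa [z] using abs_re_le_norm z
    have h3 : 1 ≤ |c|⁻¹ * ‖z‖ := by rw [inv_mul_eq_div, one_le_div hc']; exact h2
    linarith
  rw [norm_inv, norm_pow, Real.rpow_neg (by positivity), Real.rpow_natCast, Real.norm_eq_abs,
    ← div_eq_mul_inv, ← inv_div, inv_le_inv₀ (by positivity) (by positivity),
    div_le_iff₀ (by positivity), ← mul_pow, mul_comm ‖z‖]
  exact pow_le_pow_left₀ (by positivity) hbound n

theorem integrable_cpow_mul_div_pow {x c : ℝ} (hx : 0 < x) (hc : c ≠ 0) (a : ℂ) {n : ℕ}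
    (hn : 2 ≤ n) :
    Integrable fun t : ℝ => (x : ℂ) ^ ((c : ℂ) + t * I) * a / ((c : ℂ) + t * I) ^ n := by
  simp_rw [div_eq_mul_inv]
  refine (integrable_inv_pow_ofReal_add_mul_I hc hn).bdd_mul (c := x ^ c * ‖a‖) ?_
    (.of_forall fun t => ?_)
  · exact ((Continuous.const_cpow (by fun_prop)
      (.inl (ofReal_ne_zero.2 hx.ne'))).mul continuous_const).aestronglyMeasurable
  · simp [norm_cpow_eq_rpow_re_of_pos hx]

noncomputable def truncatedPowExp (k : ℕ) (c : ℝ) : ℝ → ℂ :=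
  (Ioi 0).indicator fun u => (u : ℂ) ^ k * cexp (-c * u)

section truncatedPowExp

variable {k : ℕ} {c : ℝ}

theorem continuous_truncatedPowExp (hk : k ≠ 0) : Continuous (truncatedPowExp k c) :=
  Continuous.indicator (by simp [hk]) (by fun_prop)

theorem integrable_truncatedPowExp (hc : 0 < c) : Integrable (truncatedPowExp k c) :=
  (integrable_indicator_iff measurableSet_Ioi).2
    (integrableOn_pow_mul_cexp_neg_mul_Ioi (by simpa using hc) k)

theorem fourier_truncatedPowExp (hc : 0 < c) :
    𝓕 (truncatedPowExp k c) = fun ξ : ℝ => k ! / ((c : ℂ) + 2 * π * ξ * I) ^ (k + 1) := by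
  ext ξ
  rw [Real.fourier_real_eq_integral_exp_smul,
    ← integral_pow_mul_cexp_neg_mul_Ioi (by simpa using hc), ← integral_indicator measurableSet_Ioi]
  congr 1 with u
  by_cases hu : u ∈ Ioi 0
  · simp only [truncatedPowExp, indicator_of_mem hu, smul_eq_mul, mul_left_comm _ ((u : ℂ) ^ k),
      ← Complex.exp_add]
    push_cast
    ring_nf
  · simp [truncatedPowExp, hu]

theorem integrable_fourier_truncatedPowExp (hk : k ≠ 0) (hc : 0 < c) :
    Integrable (𝓕 (truncatedPowExp k c)) := by
  rw [fourier_truncatedPowExp hc]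
  have := ((integrable_inv_pow_ofReal_add_mul_I hc.ne' (n := k + 1) (by omega)).const_mul
    (k ! : ℂ)).comp_mul_left' (R := 2 * π) (by positivity)
  simpa [div_eq_mul_inv, mul_assoc] using this

end truncatedPowExp

theorem mellinInv_factorial_div_pow {k : ℕ} (hk : k ≠ 0) {c : ℝ} (hc : 0 < c) {x : ℝ}
    (hx : 0 < x) :
    mellinInv c (fun s => k ! / s ^ (k + 1)) x = if x < 1 then (-Real.log x : ℂ) ^ k else 0 := by
  rw [mellinInv_eq_fourierInv _ _ hx, ← fourier_truncatedPowExp hc,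
    (integrable_truncatedPowExp (k := k) hc).fourierInv_fourier_eq
      (integrable_fourier_truncatedPowExp hk hc)
      (continuous_truncatedPowExp (c := c) hk).continuousAt, truncatedPowExp]
  by_cases h : x < 1
  · have hlog : -Real.log x ∈ Ioi 0 := neg_pos.2 (Real.log_neg hx h)
    have hexp : cexp (-c * ↑(-Real.log x)) = (x : ℂ) ^ (c : ℂ) := by
      rw [cpow_def_of_ne_zero (ofReal_ne_zero.2 hx.ne'), ← ofReal_log hx.le]
      push_cast
      ring_nf
    rw [indicator_of_mem hlog, if_pos h, smul_eq_mul, mul_left_comm, hexp, cpow_neg,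
      inv_mul_cancel₀ (cpow_ne_zero_iff_of_exponent_ne_zero (by simpa using hc.ne') |>.2
        (ofReal_ne_zero.2 hx.ne')), mul_one, ofReal_neg]
  · have hlog : -Real.log x ∉ Ioi 0 := by simpa using Real.log_nonneg (not_lt.1 h)
    simp [hlog, h]

theorem integral_cpow_mul_factorial_div_pow {k : ℕ} (hk : k ≠ 0) {c : ℝ} (hc : 0 < c) {x : ℝ}
    (hx : 0 < x) :
    1 / (2 * (π : ℂ)) * ∫ t : ℝ, (x : ℂ) ^ ((c : ℂ) + t * I) * k ! / ((c : ℂ) + t * I) ^ (k + 1) =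
      if 1 < x then (Real.log x : ℂ) ^ k else 0 := by
  -- `x ^ s = (x⁻¹) ^ (-s)`: the integral is the inverse Mellin transform at `x⁻¹`
  have := mellinInv_factorial_div_pow hk hc (inv_pos.2 hx)
  rw [mellinInv] at this
  have harg : (x : ℂ).arg ≠ π := by simp [arg_ofReal_of_nonneg hx.le, Real.pi_ne_zero.symm]
  simp only [Real.log_inv, inv_lt_one₀ hx, ofReal_inv, real_smul, inv_cpow _ _ harg, cpow_neg,
    inv_inv, smul_eq_mul, ofReal_neg, neg_neg] at this
  simpa [mul_div_assoc] using this

theorem integral_cpow_mul_sum_coeff_factorial_div {P : ℝ[X]} (hP : P.eval 0 = 0) {c : ℝ}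
    (hc : 0 < c) {x : ℝ} (hx : 0 < x) (L : ℝ) :
    1 / (2 * (π : ℂ)) * ∫ t : ℝ, (x : ℂ) ^ ((c : ℂ) + t * I) *
        (∑ k ∈ Finset.range (P.natDegree + 1),
          (P.coeff k : ℂ) * k ! * ((((c : ℂ) + t * I) * L) ^ k)⁻¹) / ((c : ℂ) + t * I) =
      if 1 < x then ((P.eval (Real.log x / L) : ℝ) : ℂ) else 0 := by
  have hP0 : P.coeff 0 = 0 := by rwa [Polynomial.coeff_zero_eq_eval_zero]
  have hsplit (t : ℝ) : (x : ℂ) ^ ((c : ℂ) + t * I) *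
        (∑ k ∈ Finset.range (P.natDegree + 1),
          (P.coeff k : ℂ) * k ! * ((((c : ℂ) + t * I) * L) ^ k)⁻¹) / ((c : ℂ) + t * I) =
      ∑ k ∈ Finset.range P.natDegree, (P.coeff (k + 1) / (L : ℂ) ^ (k + 1)) *
        ((x : ℂ) ^ ((c : ℂ) + t * I) * (k + 1) ! / ((c : ℂ) + t * I) ^ (k + 1 + 1)) := by
    rw [Finset.sum_range_succ', hP0, ofReal_zero, zero_mul, zero_mul, add_zero, Finset.mul_sum,
      Finset.sum_div]
    refine Finset.sum_congr rfl fun k _ => ?_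
    generalize (c : ℂ) + t * I = s
    ring
  simp_rw [hsplit]
  rw [integral_finsetSum _ fun k _ =>
    (integrable_cpow_mul_div_pow hx hc.ne' _ (by omega)).const_mul _, Finset.mul_sum]
  simp_rw [integral_const_mul, mul_left_comm (1 / (2 * (π : ℂ))),
    integral_cpow_mul_factorial_div_pow (Nat.add_one_ne_zero _) hc hx]
  split_ifs
  · rw [Polynomial.eval_eq_sum_range, Finset.sum_range_succ', hP0]
    push_cast
    simp only [zero_mul, add_zero]
    exact Finset.sum_congr rfl fun k _ => by rw [div_pow]; ring
  · simp

/-- Mellin inversion for the mollifier polynomial: the vertical-line integral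
`(1/2πi) ∫_{(c)} x^s k!/s^{k+1} ds` equals `(log x)^k` for `x > 1` and `0` for `x < 1`;
consequently `(1/2πi) ∫_{(1)} (M/m)^s \widehat{P_M}(s) ds/s
  = P(log(M/m)/log M) 𝟙_{m < M}`. -/
theorem stmt_4 :
    (∀ x : ℝ, 0 < x → x ≠ 1 → ∀ k : ℕ, 1 ≤ k → ∀ c : ℝ, 0 < c →
      (1 / (2 * (Real.pi : ℂ))) * (∫ t : ℝ, (x : ℂ) ^ ((c : ℂ) + t * Complex.I) *
          (Nat.factorial k) / ((c : ℂ) + t * Complex.I) ^ (k + 1)) =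
        if 1 < x then ((Real.log x : ℂ)) ^ k else 0) ∧
    (∀ P : Polynomial ℝ, P.eval 0 = 0 → ∀ M : ℝ, 1 < M → (∀ n : ℕ, (n : ℝ) ≠ M) →
      ∀ m : ℕ, 0 < m →
      (1 / (2 * (Real.pi : ℂ))) * (∫ t : ℝ,
          ((M / m : ℝ) : ℂ) ^ ((1 : ℂ) + t * Complex.I) *
          (∑ k ∈ Finset.range (P.natDegree + 1), (P.coeff k : ℂ) * (Nat.factorial k) *
            ((((1 : ℂ) + t * Complex.I) * (Real.log M : ℂ)) ^ k)⁻¹) /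
          ((1 : ℂ) + t * Complex.I)) =
        if (m : ℝ) < M then ((P.eval (Real.log (M / m) / Real.log M) : ℝ) : ℂ) else 0) := by
  refine ⟨fun x hx _ k hk c hc => integral_cpow_mul_factorial_div_pow (by omega) hc hx,
    fun P hP M hM _ m hm => ?_⟩
  have hm' : (0 : ℝ) < m := Nat.cast_pos.2 hm
  have h := integral_cpow_mul_sum_coeff_factorial_div hP one_pos (div_pos (by linarith) hm')
    (Real.log M)
  simpa only [ofReal_one, one_lt_div hm'] using h
end

section
/- Consider the functional $\Phi(P) = \frac{(P(1) + P'(1))^2}{2\left(\frac{1}{3}\int_0^1 P''(t)^2 dt + P'(1)^2 + 2 P'(1) P(1) + P(1)^2\right)}$ on real polynomials $P$ with $P(0) = P'(0) = 0$ and $P(1) + P'(1) \neq 0$. Then $\sup_P \Phi(P) = \frac{7}{16}$, and the supremum is attained at $P(X) = X^2 - \frac{1}{6} X^3$. -/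
/-!
Since `P(0) = P'(0) = 0`, integrating by parts twice gives
`P(1) + P'(1) = ∫₀¹ (2 - t) P''(t) dt`, so by Cauchy–Schwarz
`(P(1) + P'(1))² ≤ (7/3) ∫₀¹ P''²`. The denominator of `Φ(P)` is `2 (∫₀¹ P''² / 3 + (P(1) + P'(1))²)`,
which is therefore at least `(16/7) (P(1) + P'(1))²`. Equality holds exactly when `P''` is a multiple
of `2 - t`, e.g. for `P = X² - X³/6`.
-/

open Polynomial

/-- The functional `Φ(P)` controlling non-vanishing of derivatives of `L`-functions. -/
noncomputable def derivMollifValue (P : Polynomial ℝ) : ℝ :=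
  (P.eval 1 + (Polynomial.derivative P).eval 1) ^ 2 /
    (2 * ((1 / 3) * (∫ t in (0 : ℝ)..1,
        ((Polynomial.derivative (Polynomial.derivative P)).eval t) ^ 2) +
      ((Polynomial.derivative P).eval 1) ^ 2 +
      2 * (Polynomial.derivative P).eval 1 * P.eval 1 + (P.eval 1) ^ 2))

open MeasureTheory

theorem sq_integral_mul_le_integral_sq_mul_integral_sq {α : Type*} [MeasurableSpace α]
    {μ : Measure α} {f g : α → ℝ} (hf : Integrable (fun x => f x ^ 2) μ)
    (hg : Integrable (fun x => g x ^ 2) μ) (hfg : Integrable (fun x => f x * g x) μ) :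
    (∫ x, f x * g x ∂μ) ^ 2 ≤ (∫ x, f x ^ 2 ∂μ) * ∫ x, g x ^ 2 ∂μ := by
  have hquadratic : ∀ c : ℝ, 0 ≤ (∫ x, f x ^ 2 ∂μ) * (c * c) +
      2 * (∫ x, f x * g x ∂μ) * c + ∫ x, g x ^ 2 ∂μ := by
    intro c
    calc (0 : ℝ) ≤ ∫ x, (c * f x + g x) ^ 2 ∂μ := integral_nonneg fun x => sq_nonneg _
      _ = ∫ x, ((c * c) * f x ^ 2 + (2 * c) * (f x * g x) + g x ^ 2) ∂μ :=
        integral_congr_ae (Filter.Eventually.of_forall fun x => by ring)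
      _ = _ := by
        rw [integral_add, integral_add, integral_const_mul, integral_const_mul]
        · ring
        exacts [hf.const_mul _, hfg.const_mul _, (hf.const_mul _).add (hfg.const_mul _), hg]
  have := discrim_le_zero hquadratic
  rw [discrim] at this
  linarith

theorem Polynomial.intervalIntegral_eval_derivative (F : ℝ[X]) (a b : ℝ) :
    ∫ t in a..b, (derivative F).eval t = F.eval b - F.eval a :=
  intervalIntegral.integral_eq_sub_of_hasDerivAt (fun x _ => F.hasDerivAt x)
    (F.derivative.continuous.intervalIntegrable _ _)

theorem Polynomial.intervalIntegral_sub_mul_eval_derivative_derivative (P : ℝ[X]) (c a b : ℝ) :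
    ∫ t in a..b, (c - t) * (derivative (derivative P)).eval t =
      ((c - b) * (derivative P).eval b + P.eval b) -
        ((c - a) * (derivative P).eval a + P.eval a) := by
  have hderiv : derivative ((C c - X) * derivative P + P) =
      (C c - X) * derivative (derivative P) := by
    simp [derivative_mul]
  have := ((C c - X) * derivative P + P).intervalIntegral_eval_derivative a b
  simpa only [hderiv, eval_add, eval_mul, eval_sub, eval_C, eval_X] using this

theorem Polynomial.sq_eval_one_add_eval_derivative_one_le (P : ℝ[X]) (h0 : P.eval 0 = 0)
    (h0' : (derivative P).eval 0 = 0) :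
    (P.eval 1 + (derivative P).eval 1) ^ 2 ≤
      7 / 3 * ∫ t in (0 : ℝ)..1, ((derivative (derivative P)).eval t) ^ 2 := by
  have hweight : ∫ t in (0 : ℝ)..1, (2 - t) ^ 2 = 7 / 3 := by
    norm_num [intervalIntegral.integral_comp_sub_left (fun x : ℝ => x ^ 2), integral_pow]
  have hparts : ∫ t in (0 : ℝ)..1, (2 - t) * (derivative (derivative P)).eval t =
      P.eval 1 + (derivative P).eval 1 := by
    rw [P.intervalIntegral_sub_mul_eval_derivative_derivative]
    simp only [sub_zero, h0', mul_zero, h0, add_zero]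
    ring
  have hP'' := (derivative (derivative P)).continuous
  rw [← hparts, ← hweight]
  simp only [intervalIntegral.integral_of_le zero_le_one]
  exact sq_integral_mul_le_integral_sq_mul_integral_sq
    ((continuous_const.sub continuous_id).pow 2).integrableOn_Ioc (hP''.pow 2).integrableOn_Ioc
    ((continuous_const.sub continuous_id).mul hP'').integrableOn_Ioc

theorem derivMollifValue_le (P : ℝ[X]) (h0 : P.eval 0 = 0) (h0' : (derivative P).eval 0 = 0)
    (hN : P.eval 1 + (derivative P).eval 1 ≠ 0) : derivMollifValue P ≤ 7 / 16 := by
  set A := ∫ t in (0 : ℝ)..1, ((derivative (derivative P)).eval t) ^ 2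
  set N := P.eval 1 + (derivative P).eval 1
  have hCS : N ^ 2 ≤ 7 / 3 * A := P.sq_eval_one_add_eval_derivative_one_le h0 h0'
  have hN2 : 0 < N ^ 2 := by positivity
  have hdenom : 2 * (1 / 3 * A + (derivative P).eval 1 ^ 2 +
      2 * (derivative P).eval 1 * P.eval 1 + P.eval 1 ^ 2) = 2 * (A / 3 + N ^ 2) := by
    ring
  rw [derivMollifValue, hdenom, div_le_iff₀ (by linarith)]
  linarith

theorem derivMollifValue_X_sq_sub :
    derivMollifValue (X ^ 2 - C (1 / 6) * X ^ 3) = 7 / 16 := by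
  have hP'' : derivative (derivative (X ^ 2 - C (1 / 6) * X ^ 3 : ℝ[X])) = C 2 - X := by
    rw [derivative_sub, derivative_sub, derivative_X_pow, derivative_C_mul_X_pow,
      derivative_C_mul_X_pow, derivative_C_mul_X_pow]
    norm_num
  rw [derivMollifValue, hP'']
  norm_num [intervalIntegral.integral_comp_sub_left (fun x : ℝ => x ^ 2), integral_pow]

/-- The supremum of `Φ(P)` over real polynomials with `P(0) = P'(0) = 0` and
`P(1) + P'(1) ≠ 0` equals `7/16`, attained at `P = X^2 - X^3/6`. -/
theorem stmt_7 :
    (∀ P : Polynomial ℝ, P.eval 0 = 0 → (Polynomial.derivative P).eval 0 = 0 →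
      P.eval 1 + (Polynomial.derivative P).eval 1 ≠ 0 → derivMollifValue P ≤ 7 / 16) ∧
    derivMollifValue (Polynomial.X ^ 2 - Polynomial.C (1 / 6) * Polynomial.X ^ 3) = 7 / 16 :=
  ⟨derivMollifValue_le, derivMollifValue_X_sq_sub⟩
end

section
/- Let $f \in H^2(0,1)$ with $f(0) = f'(0) = 0$ minimize the Rayleigh-type quotient $\mathscr{Q}(f)/\mathscr{L}(f)^2$ where $\mathscr{Q}(f) = \int_0^1 f''(t)^2 dt$ and $\mathscr{L}(f) = f(1) + f'(1)$, subject to $\mathscr{L}(f) \neq 0$. Then $f$ is (up to a nonzero scalar multiple) the polynomial $X^2 - \frac{1}{6}X^3$; in particular any minimizer is a polynomial of degree at most 3. -/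
/-!
Integrating by parts twice, `f 1 + f' 1 = ∫₀¹ (2 - t) f''(t) dt` when `f 0 = f' 0 = 0`, so by
Cauchy–Schwarz `(f 1 + f' 1)² ≤ (7/3) ∫₀¹ f''²`, with equality exactly when `f''` is a multiple of
`2 - t`. The polynomial `t² - t³/6`, whose second derivative is `2 - t`, attains equality, so a
minimizer `f` has `∫₀¹ (f'' - c (2 - t))² = 0` for `c = 3 (f 1 + f' 1) / 7`; integrating twice
from `f 0 = f' 0 = 0` gives `f = c (t² - t³/6)` on `[0, 1]`.
-/

open MeasureTheory Set intervalIntegral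

theorem IntervalIntegrable.of_sq {g : ℝ → ℝ} {a b : ℝ} {μ : Measure ℝ} [IsLocallyFiniteMeasure μ]
    (hg : AEStronglyMeasurable g μ) (hg2 : IntervalIntegrable (fun t => g t ^ 2) μ a b) :
    IntervalIntegrable g μ a b := by
  refine ((intervalIntegrable_const (c := (1 : ℝ))).add hg2).mono_fun hg.restrict
    (Filter.Eventually.of_forall fun t => ?_)
  simp only [Real.norm_eq_abs]
  rw [abs_of_nonneg (by positivity : (0 : ℝ) ≤ 1 + g t ^ 2)]
  nlinarith [sq_nonneg (|g t| - 1), sq_abs (g t)]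

theorem IntervalIntegrable.sub_const_mul_sq {g h : ℝ → ℝ} {a b : ℝ} {μ : Measure ℝ}
    [IsLocallyFiniteMeasure μ] (hg : IntervalIntegrable g μ a b)
    (hg2 : IntervalIntegrable (fun t => g t ^ 2) μ a b) (hh : Continuous h) (c : ℝ) :
    IntervalIntegrable (fun t => (g t - c * h t) ^ 2) μ a b := by
  have hhg := (hg.continuousOn_mul hh.continuousOn).const_mul (2 * c)
  have hh2 :=
    ((by fun_prop : Continuous fun t => h t ^ 2).intervalIntegrable (μ := μ) a b).const_mul (c ^ 2)
  convert (hg2.sub hhg).add hh2 using 1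
  ext t; ring

theorem integral_sub_const_mul_sq {g h : ℝ → ℝ} {a b : ℝ} {μ : Measure ℝ}
    [IsLocallyFiniteMeasure μ] (hg : IntervalIntegrable g μ a b)
    (hg2 : IntervalIntegrable (fun t => g t ^ 2) μ a b) (hh : Continuous h) (c : ℝ) :
    ∫ t in a..b, (g t - c * h t) ^ 2 ∂μ = (∫ t in a..b, g t ^ 2 ∂μ) -
      2 * c * (∫ t in a..b, h t * g t ∂μ) + c ^ 2 * ∫ t in a..b, h t ^ 2 ∂μ := by
  have hhg := (hg.continuousOn_mul hh.continuousOn).const_mul (2 * c)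
  have hh2 :=
    ((by fun_prop : Continuous fun t => h t ^ 2).intervalIntegrable (μ := μ) a b).const_mul (c ^ 2)
  calc ∫ t in a..b, (g t - c * h t) ^ 2 ∂μ
      = ∫ t in a..b, (g t ^ 2 - 2 * c * (h t * g t) + c ^ 2 * h t ^ 2) ∂μ := by
        congr 1; ext t; ring
    _ = _ := by
        rw [integral_add (hg2.sub hhg) hh2, integral_sub hg2 hhg,
          intervalIntegral.integral_const_mul, intervalIntegral.integral_const_mul]

theorem ae_eq_of_integral_sub_sq_eq_zero {g h : ℝ → ℝ} {a b : ℝ} {μ : Measure ℝ} (hab : a ≤ b)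
    (hi : IntervalIntegrable (fun t => (g t - h t) ^ 2) μ a b)
    (h0 : ∫ t in a..b, (g t - h t) ^ 2 ∂μ = 0) : g =ᵐ[μ.restrict (Ioc a b)] h := by
  have := (integral_eq_zero_iff_of_le_of_nonneg_ae hab
    (Filter.Eventually.of_forall fun t => sq_nonneg (g t - h t)) hi).1 h0
  filter_upwards [this] with t ht
  simpa [sub_eq_zero] using ht

theorem eqOn_Icc_of_hasDerivAt_of_ae_eq {F G F' G' : ℝ → ℝ} {a b : ℝ}
    (hF : ∀ t ∈ Icc a b, HasDerivAt F (F' t) t) (hG : ∀ t ∈ Icc a b, HasDerivAt G (G' t) t)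
    (hF' : IntervalIntegrable F' volume a b) (hG' : IntervalIntegrable G' volume a b)
    (hae : F' =ᵐ[volume.restrict (Ioc a b)] G') (ha : F a = G a) : EqOn F G (Icc a b) := by
  intro t ht
  have hsub : uIcc a t ⊆ Icc a b := by
    rw [uIcc_of_le ht.1]; exact Icc_subset_Icc_right ht.2
  have hsub' : uIcc a t ⊆ uIcc a b := hsub.trans Icc_subset_uIcc
  have hintegral : ∫ s in a..t, F' s = ∫ s in a..t, G' s := by
    refine integral_congr_ae ?_
    rw [Filter.EventuallyEq, ae_restrict_iff' measurableSet_Ioc] at hae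
    filter_upwards [hae] with s hs hst
    rw [uIoc_of_le ht.1] at hst
    exact hs ⟨hst.1, hst.2.trans ht.2⟩
  rw [integral_eq_sub_of_hasDerivAt (fun s hs => hF s (hsub hs)) (hF'.mono_set hsub'),
    integral_eq_sub_of_hasDerivAt (fun s hs => hG s (hsub hs)) (hG'.mono_set hsub')] at hintegral
  linarith

theorem eqOn_Icc_of_hasDerivAt_of_hasDerivAt_of_ae_eq {F F' F'' G G' G'' : ℝ → ℝ} {a b : ℝ}
    (hF : ∀ t ∈ Icc a b, HasDerivAt F (F' t) t) (hF' : ∀ t ∈ Icc a b, HasDerivAt F' (F'' t) t)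
    (hG : ∀ t ∈ Icc a b, HasDerivAt G (G' t) t) (hG' : ∀ t ∈ Icc a b, HasDerivAt G' (G'' t) t)
    (hF'' : IntervalIntegrable F'' volume a b) (hG'' : IntervalIntegrable G'' volume a b)
    (hae : F'' =ᵐ[volume.restrict (Ioc a b)] G'') (ha : F a = G a) (ha' : F' a = G' a) :
    EqOn F G (Icc a b) := by
  rcases le_or_gt a b with hab | hba
  · have hintegrable : ∀ {H H' : ℝ → ℝ}, (∀ t ∈ Icc a b, HasDerivAt H (H' t) t) →
        IntervalIntegrable H volume a b := fun hH =>
      ContinuousOn.intervalIntegrable (by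
        rw [uIcc_of_le hab]; exact fun t ht => (hH t ht).continuousAt.continuousWithinAt)
    have hderiv := eqOn_Icc_of_hasDerivAt_of_ae_eq hF' hG' hF'' hG'' hae ha'
    exact eqOn_Icc_of_hasDerivAt_of_ae_eq hF hG (hintegrable hF') (hintegrable hG')
      (ae_restrict_of_forall_mem measurableSet_Ioc fun t ht => hderiv (Ioc_subset_Icc_self ht)) ha
  · simp [Icc_eq_empty_of_lt hba]

theorem integral_two_sub_mul_eq {f f' f'' : ℝ → ℝ}
    (hf : ∀ t ∈ Icc (0 : ℝ) 1, HasDerivAt f (f' t) t)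
    (hf' : ∀ t ∈ Icc (0 : ℝ) 1, HasDerivAt f' (f'' t) t)
    (hint : IntervalIntegrable f'' volume 0 1) :
    ∫ t in (0 : ℝ)..1, (2 - t) * f'' t = f 1 + f' 1 - f 0 - 2 * f' 0 := by
  have hderiv : ∀ t ∈ uIcc (0 : ℝ) 1,
      HasDerivAt (fun t => (2 - t) * f' t + f t) ((2 - t) * f'' t) t := by
    intro t ht
    rw [uIcc_of_le zero_le_one] at ht
    exact ((((hasDerivAt_id' t).const_sub 2).mul (hf' t ht)).add (hf t ht)).congr_deriv (by ring)
  rw [integral_eq_sub_of_hasDerivAt hderiv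
    (hint.continuousOn_mul (continuous_const.sub continuous_id).continuousOn)]
  ring

theorem hasDerivAt_sq_sub_cube_div_six (t : ℝ) :
    HasDerivAt (fun t : ℝ => t ^ 2 - t ^ 3 / 6) (2 * t - t ^ 2 / 2) t :=
  ((hasDerivAt_pow 2 t).sub ((hasDerivAt_pow 3 t).div_const 6)).congr_deriv (by push_cast; ring)

theorem hasDerivAt_two_mul_sub_sq_div_two (t : ℝ) :
    HasDerivAt (fun t : ℝ => 2 * t - t ^ 2 / 2) (2 - t) t :=
  (((hasDerivAt_id t).const_mul 2).sub ((hasDerivAt_pow 2 t).div_const 2)).congr_deriv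
    (by push_cast; ring)

theorem integral_two_sub_sq : ∫ t in (0 : ℝ)..1, (2 - t) ^ 2 = 7 / 3 := by
  rw [intervalIntegral.integral_comp_sub_left (fun x => x ^ 2)]
  norm_num [integral_pow]

/-- A minimizer of the Rayleigh-type quotient `(∫_0^1 f''²) / (f(1) + f'(1))²` among
twice-differentiable functions with square-integrable second derivative satisfying
`f(0) = f'(0) = 0` and `f(1) + f'(1) ≠ 0` is, up to a nonzero scalar, the polynomial
`X² - X³/6` on `[0,1]`. -/
theorem stmt_9 (f f' f'' : ℝ → ℝ)
    (hf : ∀ t : ℝ, HasDerivAt f (f' t) t) (hf' : ∀ t : ℝ, HasDerivAt f' (f'' t) t)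
    (hL2 : IntervalIntegrable (fun t => (f'' t) ^ 2) MeasureTheory.volume 0 1)
    (h0 : f 0 = 0) (h0' : f' 0 = 0) (hL : f 1 + f' 1 ≠ 0)
    (hmin : ∀ g g' g'' : ℝ → ℝ, (∀ t : ℝ, HasDerivAt g (g' t) t) →
      (∀ t : ℝ, HasDerivAt g' (g'' t) t) →
      IntervalIntegrable (fun t => (g'' t) ^ 2) MeasureTheory.volume 0 1 →
      g 0 = 0 → g' 0 = 0 → g 1 + g' 1 ≠ 0 →
      (∫ t in (0 : ℝ)..1, (f'' t) ^ 2) / (f 1 + f' 1) ^ 2 ≤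
        (∫ t in (0 : ℝ)..1, (g'' t) ^ 2) / (g 1 + g' 1) ^ 2) :
    ∃ c : ℝ, c ≠ 0 ∧ ∀ t ∈ Set.Icc (0 : ℝ) 1, f t = c * (t ^ 2 - t ^ 3 / 6) := by
  set L := f 1 + f' 1
  set c := 3 * L / 7
  have hint : IntervalIntegrable f'' volume 0 1 :=
    hL2.of_sq (funext (fun t => (hf' t).deriv) ▸ measurable_deriv f').aestronglyMeasurable
  have hL_eq : ∫ t in (0 : ℝ)..1, (2 - t) * f'' t = L := by
    rw [integral_two_sub_mul_eq (fun t _ => hf t) (fun t _ => hf' t) hint, h0, h0']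
    ring
  have hQ_le : ∫ t in (0 : ℝ)..1, f'' t ^ 2 ≤ 3 / 7 * L ^ 2 := by
    have h := hmin _ _ _ hasDerivAt_sq_sub_cube_div_six hasDerivAt_two_mul_sub_sq_div_two
      ((continuous_const.sub continuous_id).pow 2 |>.intervalIntegrable 0 1)
      (by norm_num) (by norm_num) (by norm_num)
    rw [integral_two_sub_sq, div_le_iff₀ (by positivity)] at h
    norm_num at h
    linarith
  have hres : ∫ t in (0 : ℝ)..1, (f'' t - c * (2 - t)) ^ 2 = 0 := by
    refine le_antisymm ?_ (integral_nonneg zero_le_one fun t _ => sq_nonneg _)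
    rw [integral_sub_const_mul_sq (h := fun t => 2 - t) hint hL2 (by fun_prop), hL_eq,
      integral_two_sub_sq]
    have hc : 2 * c * L - c ^ 2 * (7 / 3) = 3 / 7 * L ^ 2 := by simp only [c]; ring
    linarith
  refine ⟨c, by positivity, eqOn_Icc_of_hasDerivAt_of_hasDerivAt_of_ae_eq
    (fun t _ => hf t) (fun t _ => hf' t)
    (fun t _ => (hasDerivAt_sq_sub_cube_div_six t).const_mul c)
    (fun t _ => (hasDerivAt_two_mul_sub_sq_div_two t).const_mul c) hint
    (Continuous.intervalIntegrable (by fun_prop) 0 1)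
    (ae_eq_of_integral_sub_sq_eq_zero zero_le_one (hint.sub_const_mul_sq hL2 (by fun_prop) c) hres)
    (by simp [h0]) (by simp [h0'])⟩
end

section
/- Let $F$ be a number field, $\mathfrak{q}$ a nonzero ideal of $\mathcal{O}_F$, $\mathfrak{m}, \mathfrak{n}$ nonzero integral ideals, and $0 < \delta < 1/2$. Then $\sum_{\mathfrak{c} \subset \mathfrak{q}, \mathfrak{c} \neq 0} \frac{N(\gcd(\mathfrak{m},\mathfrak{n},\mathfrak{c}))^{1/2}}{N(\mathfrak{c})^{3/2 - \delta}} \ll_{\delta} \frac{N(\gcd(\mathfrak{m},\mathfrak{n},\mathfrak{q}))^{1/2}}{N(\mathfrak{q})^{3/2-\delta}} \cdot N(\gcd(\mathfrak{m},\mathfrak{n}))^{\delta}$, where the sum is over nonzero ideals $\mathfrak{c}$ contained in $\mathfrak{q}$ and the implied constant depends only on $\delta$ and $F$. -/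
/-!
Put `𝔤 = 𝔪 + 𝔫` and write `𝔠 = 𝔮𝔞`. Since `(𝔤 + 𝔮)(𝔤 + 𝔞) ⊆ 𝔤 + 𝔮𝔞`, the factor
`N(𝔤 + 𝔮)^{1/2} / N(𝔮)^{3/2-δ}` comes out, leaving the sum of `N(𝔤 + 𝔞)^{1/2} / N(𝔞)^{3/2-δ}`
over all `𝔞`. Factor `𝔞 = 𝔡𝔟` with `𝔡 = 𝔤 + 𝔞`, a divisor of `𝔤`: the term becomes
`N(𝔡)^{-(1-δ)} N(𝔟)^{-(3/2-δ)}`, and since `𝔞 ↦ (𝔡, 𝔟)` is injective, the sum is at most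
`(∑_{𝔡 ∣ 𝔤} N(𝔡)^{-(1-δ)}) ζ_F(3/2 - δ)`. The Dedekind zeta value is finite because
`3/2 - δ > 1`. The divisor sum is at most the Euler product `∏_{𝔭 ∣ 𝔤} (1 - N𝔭^{-(1-δ)})⁻¹`, and
each factor is at most `N𝔭^δ` except for the finitely many `𝔭` of small norm.
-/

open Finset Filter Asymptotics UniqueFactorizationMonoid
open scoped NumberField

theorem sum_prod_pow_le_prod_inv_one_sub {κ : Type*} [Fintype κ] [DecidableEq κ] {x : κ → ℝ}
    (hx0 : ∀ k, 0 ≤ x k) (hx1 : ∀ k, x k < 1) (E : Finset (κ → ℕ)) :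
    ∑ e ∈ E, ∏ k, x k ^ e k ≤ ∏ k, (1 - x k)⁻¹ := by
  set M := E.sup fun e => univ.sup e
  have hE : E ⊆ Fintype.piFinset fun _ => range (M + 1) := fun e he =>
    Fintype.mem_piFinset.mpr fun k => mem_range.mpr <| Nat.lt_succ_of_le <|
      (le_sup (f := e) (mem_univ k)).trans (le_sup (f := fun e => univ.sup e) he)
  calc ∑ e ∈ E, ∏ k, x k ^ e k
      ≤ ∑ e ∈ Fintype.piFinset fun _ => range (M + 1), ∏ k, x k ^ e k :=
        sum_le_sum_of_subset_of_nonneg hE fun _ _ _ => prod_nonneg fun k _ => pow_nonneg (hx0 k) _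
    _ = ∏ k, ∑ j ∈ range (M + 1), x k ^ j := (prod_univ_sum _ _).symm
    _ ≤ ∏ k, (1 - x k)⁻¹ := by
      refine prod_le_prod (fun k _ => sum_nonneg fun j _ => pow_nonneg (hx0 k) j) fun k _ => ?_
      rw [← tsum_geometric_of_lt_one (hx0 k) (hx1 k)]
      exact (summable_geometric_of_lt_one (hx0 k) (hx1 k)).sum_le_tsum _
        fun j _ => pow_nonneg (hx0 k) j

theorem exists_inv_one_sub_rpow_neg_le_rpow {α δ : ℝ} (hα : 0 < α) (hδ : 0 < δ) :
    ∃ T : ℝ, ∀ x ≥ T, (1 - x ^ (-α))⁻¹ ≤ x ^ δ := by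
  have hlim := (tendsto_rpow_neg_atTop hα).add (tendsto_rpow_neg_atTop hδ)
  rw [add_zero] at hlim
  obtain ⟨T, hT⟩ := eventually_atTop.mp
    ((hlim.eventually (gt_mem_nhds one_pos)).and (eventually_gt_atTop 0))
  refine ⟨T, fun x hx => ?_⟩
  obtain ⟨hsum, hx0⟩ := hT x hx
  rw [inv_le_comm₀ (by linarith [Real.rpow_nonneg hx0.le (-δ)]) (by positivity),
    ← Real.rpow_neg hx0.le]
  linarith

namespace Ideal

theorem sup_mul_sup_le {R : Type*} [CommSemiring R] (g q a : Ideal R) :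
    (g ⊔ q) * (g ⊔ a) ≤ g ⊔ q * a := by
  rw [sup_mul, mul_sup, mul_sup]
  exact sup_le (sup_le (mul_le_left.trans le_sup_left) (mul_le_left.trans le_sup_left))
    (sup_le (mul_le_right.trans le_sup_left) le_sup_right)

variable {S : Type*} [CommRing S] [IsDedekindDomain S]

theorem eq_prod_pow_count [DecidableEq (Ideal S)] {b : Ideal S} (hb : b ≠ ⊥)
    {P : Finset (Ideal S)} (hP : (normalizedFactors b).toFinset ⊆ P) :
    b = ∏ p ∈ P, p ^ (normalizedFactors b).count p := by
  rw [← prod_multiset_count_of_subset _ _ hP, prod_normalizedFactors_eq hb, normalize_eq]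

variable [Module.Free ℤ S]

theorem absNorm_rpow_eq_prod_pow_count [DecidableEq (Ideal S)] {b : Ideal S} (hb : b ≠ ⊥)
    {P : Finset (Ideal S)} (hP : (normalizedFactors b).toFinset ⊆ P) (s : ℝ) :
    (absNorm b : ℝ) ^ s = ∏ p ∈ P, ((absNorm p : ℝ) ^ s) ^ (normalizedFactors b).count p := by
  conv_lhs => rw [eq_prod_pow_count hb hP, map_prod]
  push_cast [map_pow]
  rw [← Real.finsetProd_rpow _ _ fun p _ => by positivity]
  exact prod_congr rfl fun p _ => (Real.rpow_pow_comm (Nat.cast_nonneg _) _ _).symm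

variable [Module.Finite ℤ S]

theorem one_lt_absNorm_of_prime {p : Ideal S} (hp : Prime p) : 1 < absNorm p := by
  have h0 : absNorm p ≠ 0 := absNorm_eq_zero_iff.not.mpr hp.ne_zero
  have h1 : absNorm p ≠ 1 := absNorm_eq_one_iff.not.mpr (by simpa using hp.ne_one)
  omega

theorem sum_absNorm_rpow_neg_le_prod_inv_one_sub {σ : ℝ} (hσ : 0 < σ) {P : Finset (Ideal S)}
    (hP : ∀ p ∈ P, Prime p) {B : Finset (Ideal S)}
    (hB : ∀ b ∈ B, b ≠ ⊥ ∧ (normalizedFactors b).toFinset ⊆ P) :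
    ∑ b ∈ B, (absNorm b : ℝ) ^ (-σ) ≤ ∏ p ∈ P, (1 - (absNorm p : ℝ) ^ (-σ))⁻¹ := by
  classical
  let x : P → ℝ := fun p => (absNorm (p : Ideal S) : ℝ) ^ (-σ)
  let e : Ideal S → P → ℕ := fun b p => (normalizedFactors b).count (p : Ideal S)
  have hx0 (p : P) : 0 ≤ x p := by positivity
  have hx1 (p : P) : x p < 1 := Real.rpow_lt_one_of_one_lt_of_neg
    (mod_cast one_lt_absNorm_of_prime (hP p p.2)) (neg_neg_of_pos hσ)
  have hterm : ∀ b ∈ B, (absNorm b : ℝ) ^ (-σ) = ∏ p, x p ^ e b p := fun b hb => by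
    rw [absNorm_rpow_eq_prod_pow_count (hB b hb).1 (hB b hb).2, ← prod_coe_sort]
  have he : Set.InjOn e B := fun b hb b' hb' h => by
    rw [eq_prod_pow_count (hB b hb).1 (hB b hb).2, eq_prod_pow_count (hB b' hb').1 (hB b' hb').2,
      ← prod_coe_sort, ← prod_coe_sort P]
    exact prod_congr rfl fun p _ => congrArg _ (congrFun h p)
  calc ∑ b ∈ B, (absNorm b : ℝ) ^ (-σ) = ∑ v ∈ B.image e, ∏ p, x p ^ v p := by
        rw [sum_image he]
        exact sum_congr rfl hterm
    _ ≤ ∏ p, (1 - x p)⁻¹ := sum_prod_pow_le_prod_inv_one_sub hx0 hx1 _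
    _ = ∏ p ∈ P, (1 - (absNorm p : ℝ) ^ (-σ))⁻¹ :=
        prod_coe_sort P fun p => (1 - (absNorm p : ℝ) ^ (-σ))⁻¹

theorem tsum_dvd_absNorm_rpow_neg_le_prod {σ : ℝ} (hσ : 0 < σ) {g : Ideal S} (hg : g ≠ ⊥) :
    ∑' d : {d : Ideal S // d ∣ g}, (absNorm (d : Ideal S) : ℝ) ^ (-σ) ≤
      ∏ p ∈ (normalizedFactors g).toFinset, (1 - (absNorm p : ℝ) ^ (-σ))⁻¹ := by
  classical
  let _ := fintypeSubtypeDvd g hg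
  rw [tsum_fintype]
  refine (sum_map univ (Function.Embedding.subtype _)
    fun d => (absNorm d : ℝ) ^ (-σ)).symm.trans_le ?_
  refine sum_absNorm_rpow_neg_le_prod_inv_one_sub hσ
    (fun p hp => prime_of_normalized_factor p (Multiset.mem_toFinset.mp hp)) fun d hd => ?_
  obtain ⟨⟨d, hdg⟩, -, rfl⟩ := mem_map.mp hd
  have hd0 : d ≠ ⊥ := by
    rintro rfl
    exact hg (zero_dvd_iff.mp hdg)
  exact ⟨hd0, Multiset.toFinset_subset.mpr <| Multiset.subset_of_le <|
    (dvd_iff_normalizedFactors_le_normalizedFactors hd0 hg).mp hdg⟩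

theorem prod_absNorm_rpow_normalizedFactors_le {g : Ideal S} (hg : g ≠ ⊥) {δ : ℝ} (hδ : 0 ≤ δ) :
    ∏ p ∈ (normalizedFactors g).toFinset, (absNorm p : ℝ) ^ δ ≤ (absNorm g : ℝ) ^ δ := by
  classical
  rw [Real.finsetProd_rpow _ _ fun _ _ => Nat.cast_nonneg _]
  refine Real.rpow_le_rpow (by positivity) ?_ hδ
  rw [← Nat.cast_prod, ← map_prod, Nat.cast_le]
  refine Nat.le_of_dvd (Nat.pos_of_ne_zero (absNorm_eq_zero_iff.not.mpr hg)) (map_dvd _ ?_)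
  exact prod_primes_dvd g (fun p hp => prime_of_normalized_factor p (Multiset.mem_toFinset.mp hp))
    fun p hp => dvd_of_mem_normalizedFactors (Multiset.mem_toFinset.mp hp)

theorem exists_prod_inv_one_sub_absNorm_rpow_neg_le [CharZero S] {α δ : ℝ} (hα : 0 < α)
    (hδ : 0 < δ) :
    ∃ C : ℝ, 0 < C ∧ ∀ g : Ideal S, g ≠ ⊥ →
      ∏ p ∈ (normalizedFactors g).toFinset, (1 - (absNorm p : ℝ) ^ (-α))⁻¹ ≤
        C * (absNorm g : ℝ) ^ δ := by
  classical
  obtain ⟨T, hT⟩ := exists_inv_one_sub_rpow_neg_le_rpow hα hδ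
  let f : Ideal S → ℝ := fun p => (1 - (absNorm p : ℝ) ^ (-α))⁻¹
  have hf1 {p : Ideal S} (hp : Prime p) : 1 ≤ f p := by
    have hlt : (absNorm p : ℝ) ^ (-α) < 1 :=
      Real.rpow_lt_one_of_one_lt_of_neg (mod_cast one_lt_absNorm_of_prime hp) (neg_neg_of_pos hα)
    exact (one_le_inv₀ (sub_pos.mpr hlt)).mpr (sub_le_self 1 (by positivity))
  have hf0 {p : Ideal S} (hp : Prime p) : 0 ≤ f p := zero_le_one.trans (hf1 hp)
  have hQ : {p : Ideal S | Prime p ∧ (absNorm p : ℝ) < T}.Finite :=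
    (finite_setOfPred_absNorm_le ⌈T⌉₊).subset fun p hp =>
      show absNorm p ≤ ⌈T⌉₊ by exact_mod_cast hp.2.le.trans (Nat.le_ceil T)
  refine ⟨∏ p ∈ hQ.toFinset, f p,
    prod_pos fun p hp => one_pos.trans_le (hf1 (hQ.mem_toFinset.mp hp).1), fun g hg => ?_⟩
  set P := (normalizedFactors g).toFinset
  have hP {p} (hp : p ∈ P) : Prime p := prime_of_normalized_factor p (Multiset.mem_toFinset.mp hp)
  have hsmall : ∏ p ∈ P with (absNorm p : ℝ) < T, f p ≤ ∏ p ∈ hQ.toFinset, f p :=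
    prod_le_prod_of_subset_of_one_le
      (fun p hp => hQ.mem_toFinset.mpr ⟨hP (mem_filter.mp hp).1, (mem_filter.mp hp).2⟩)
      (fun p hp => hf0 (hP (mem_filter.mp hp).1)) fun p hp _ => hf1 (hQ.mem_toFinset.mp hp).1
  have hlarge : ∏ p ∈ P with ¬(absNorm p : ℝ) < T, f p ≤ (absNorm g : ℝ) ^ δ := calc
    _ ≤ ∏ p ∈ P with ¬(absNorm p : ℝ) < T, (absNorm p : ℝ) ^ δ :=
      prod_le_prod (fun p hp => hf0 (hP (mem_filter.mp hp).1))
        fun p hp => hT _ (not_lt.mp (mem_filter.mp hp).2)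
    _ ≤ ∏ p ∈ P, (absNorm p : ℝ) ^ δ :=
      prod_le_prod_of_subset_of_one_le (filter_subset _ _) (fun _ _ => by positivity)
        fun p hp _ => Real.one_le_rpow (mod_cast (one_lt_absNorm_of_prime (hP hp)).le) hδ.le
    _ ≤ (absNorm g : ℝ) ^ δ := prod_absNorm_rpow_normalizedFactors_le hg hδ.le
  rw [← prod_filter_mul_prod_filter_not P fun p => (absNorm p : ℝ) < T]
  exact mul_le_mul hsmall hlarge (prod_nonneg fun p hp => hf0 (hP (mem_filter.mp hp).1))
    (prod_nonneg fun p hp => hf0 (hQ.mem_toFinset.mp hp).1)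

theorem exists_tsum_dvd_absNorm_rpow_neg_le [CharZero S] {α δ : ℝ} (hα : 0 < α) (hδ : 0 < δ) :
    ∃ C : ℝ, 0 < C ∧ ∀ g : Ideal S, g ≠ ⊥ →
      ∑' d : {d : Ideal S // d ∣ g}, (absNorm (d : Ideal S) : ℝ) ^ (-α) ≤
        C * (absNorm g : ℝ) ^ δ := by
  obtain ⟨C, hC, hprod⟩ := exists_prod_inv_one_sub_absNorm_rpow_neg_le (S := S) hα hδ
  exact ⟨C, hC, fun g hg => (tsum_dvd_absNorm_rpow_neg_le_prod hα hg).trans (hprod g hg)⟩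

theorem absNorm_sup_mul_le {g : Ideal S} (hg : g ≠ ⊥) (q a : Ideal S) :
    absNorm (g ⊔ q * a) ≤ absNorm (g ⊔ q) * absNorm (g ⊔ a) := by
  rw [← map_mul]
  refine Nat.le_of_dvd (Nat.pos_of_ne_zero ?_) (absNorm_dvd_absNorm_of_le (sup_mul_sup_le g q a))
  rw [Ne, absNorm_eq_zero_iff, ← zero_eq_bot, mul_eq_zero, zero_eq_bot]
  simp [hg]

theorem absNorm_sup_mul_rpow_div_le {g : Ideal S} (hg : g ≠ ⊥) (q a : Ideal S) {s : ℝ}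
    (hs : 0 ≤ s) (σ : ℝ) :
    (absNorm (g ⊔ q * a) : ℝ) ^ s / (absNorm (q * a) : ℝ) ^ σ ≤
      (absNorm (g ⊔ q) : ℝ) ^ s / (absNorm q : ℝ) ^ σ *
        ((absNorm (g ⊔ a) : ℝ) ^ s / (absNorm a : ℝ) ^ σ) := by
  rw [div_mul_div_comm, ← Real.mul_rpow (by positivity) (by positivity),
    ← Real.mul_rpow (by positivity) (by positivity), map_mul, Nat.cast_mul]
  gcongr
  exact_mod_cast absNorm_sup_mul_le hg q a

theorem tsum_le_absNorm_sup_rpow_div_mul_tsum {g q : Ideal S} (hg : g ≠ ⊥) (hq : q ≠ ⊥) {s : ℝ}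
    (hs : 0 ≤ s) (σ : ℝ)
    (hT : Summable fun a : Ideal S => (absNorm (g ⊔ a) : ℝ) ^ s / (absNorm a : ℝ) ^ σ) :
    ∑' c : {c : Ideal S // c ≤ q ∧ c ≠ ⊥},
        (absNorm (g ⊔ c) : ℝ) ^ s / (absNorm (c : Ideal S) : ℝ) ^ σ ≤
      (absNorm (g ⊔ q) : ℝ) ^ s / (absNorm q : ℝ) ^ σ *
        ∑' a : Ideal S, (absNorm (g ⊔ a) : ℝ) ^ s / (absNorm a : ℝ) ^ σ := by
  let e : {a : Ideal S // a ≠ ⊥} ≃ {c : Ideal S // c ≤ q ∧ c ≠ ⊥} :=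
    Equiv.ofBijective (fun a => ⟨q * a, mul_le_left, mul_ne_zero hq a.2⟩)
      ⟨fun a a' h => Subtype.ext (mul_left_cancel₀ hq (congrArg Subtype.val h)), fun c => by
        obtain ⟨a, ha⟩ := dvd_iff_le.mpr c.2.1
        exact ⟨⟨a, by rintro rfl; exact c.2.2 (by simpa using ha)⟩, Subtype.ext ha.symm⟩⟩
  have hle (a : {a : Ideal S // a ≠ ⊥}) := absNorm_sup_mul_rpow_div_le hg q a.1 hs σ
  have hsum := (hT.subtype {a | a ≠ ⊥}).mul_left
    ((absNorm (g ⊔ q) : ℝ) ^ s / (absNorm q : ℝ) ^ σ)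
  rw [← e.tsum_eq]
  refine ((hsum.of_nonneg_of_le (fun _ => by positivity) hle).tsum_le_tsum hle hsum).trans ?_
  rw [tsum_mul_left]
  gcongr
  exact hT.tsum_subtype_le _ {a | a ≠ ⊥} fun _ => by positivity

theorem summable_and_tsum_absNorm_sup_rpow_div_le {g : Ideal S} (hg : g ≠ ⊥) (s : ℝ) {σ : ℝ}
    (hζ : Summable fun b : Ideal S => (absNorm b : ℝ) ^ (-σ)) :
    Summable (fun a : Ideal S => (absNorm (g ⊔ a) : ℝ) ^ s / (absNorm a : ℝ) ^ σ) ∧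
      ∑' a : Ideal S, (absNorm (g ⊔ a) : ℝ) ^ s / (absNorm a : ℝ) ^ σ ≤
        (∑' d : {d : Ideal S // d ∣ g}, (absNorm (d : Ideal S) : ℝ) ^ (s - σ)) *
          ∑' b : Ideal S, (absNorm b : ℝ) ^ (-σ) := by
  let _ := fintypeSubtypeDvd g hg
  choose b hb using fun a : Ideal S => dvd_iff_le.mpr (le_sup_right : a ≤ g ⊔ a)
  let Φ : Ideal S → {d : Ideal S // d ∣ g} × Ideal S :=
    fun a => (⟨g ⊔ a, dvd_iff_le.mpr le_sup_left⟩, b a)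
  have hΦ : Function.Injective Φ := fun a a' h => by
    obtain ⟨h₁, h₂⟩ := Prod.ext_iff.mp h
    rw [hb a, hb a', show g ⊔ a = g ⊔ a' from congrArg Subtype.val h₁, show b a = b a' from h₂]
  let u : {d : Ideal S // d ∣ g} × Ideal S → ℝ :=
    fun x => (absNorm (x.1 : Ideal S) : ℝ) ^ (s - σ) * (absNorm x.2 : ℝ) ^ (-σ)
  have hd : Summable fun d : {d : Ideal S // d ∣ g} => (absNorm (d : Ideal S) : ℝ) ^ (s - σ) :=
    Summable.of_finite
  have hu : Summable u :=
    hd.mul_of_nonneg hζ (fun _ => Real.rpow_nonneg (Nat.cast_nonneg _) _)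
      fun _ => Real.rpow_nonneg (Nat.cast_nonneg _) _
  have hT : (fun a : Ideal S => (absNorm (g ⊔ a) : ℝ) ^ s / (absNorm a : ℝ) ^ σ) = u ∘ Φ := by
    funext a
    have hpos : (0 : ℝ) < absNorm (g ⊔ a) :=
      Nat.cast_pos.mpr (Nat.pos_of_ne_zero (absNorm_eq_zero_iff.not.mpr (by simp [hg])))
    have hN : (absNorm a : ℝ) = absNorm (g ⊔ a) * absNorm (b a) := by
      rw [← Nat.cast_mul, ← map_mul, ← hb a]
    show _ = (absNorm (g ⊔ a) : ℝ) ^ (s - σ) * (absNorm (b a) : ℝ) ^ (-σ)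
    rw [hN, Real.mul_rpow hpos.le (Nat.cast_nonneg _), Real.rpow_sub hpos,
      Real.rpow_neg (Nat.cast_nonneg _)]
    ring
  refine ⟨hT ▸ hu.comp_injective hΦ, ?_⟩
  rw [hT, hd.tsum_mul_tsum hζ hu]
  exact tsum_comp_le_tsum_of_inj hu (fun _ => by positivity) hΦ

end Ideal

namespace NumberField

variable (K : Type*) [Field K] [NumberField K]

theorem isBigO_sum_card_absNorm_eq :
    (fun n : ℕ => ∑ k ∈ Icc 1 n, (Nat.card {I : Ideal (𝓞 K) // Ideal.absNorm I = k} : ℝ))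
      =O[atTop] fun n => (n : ℝ) ^ (1 : ℝ) := by
  have hle (n : ℕ) : ∑ k ∈ Icc 1 n, (Nat.card {I : Ideal (𝓞 K) // Ideal.absNorm I = k} : ℝ) ≤
      Nat.card {I : Ideal (𝓞 K) // (Ideal.absNorm I : ℝ) ≤ n} := by
    have hcard : Nat.card {I : Ideal (𝓞 K) // (Ideal.absNorm I : ℝ) ≤ n} =
        ∑ k ∈ Icc 0 n, Nat.card {I : Ideal (𝓞 K) // Ideal.absNorm I = k} := by
      rw [← card_preimage_eq_sum_card_image_eq fun k _ => Ideal.finite_setOfPred_absNorm_eq k]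
      simp [Set.coe_eq_subtype]
    rw [hcard, Nat.cast_sum]
    exact sum_le_sum_of_subset_of_nonneg (Icc_subset_Icc_left zero_le_one)
      fun _ _ _ => by positivity
  have hO : (fun n : ℕ => (Nat.card {I : Ideal (𝓞 K) // (Ideal.absNorm I : ℝ) ≤ n} : ℝ))
      =O[atTop] fun n => (n : ℝ) ^ (1 : ℝ) := by
    refine isBigO_atTop_natCast_rpow_of_tendsto_div_rpow (a := dedekindZeta_residue K) ?_
    convert (Ideal.tendsto_norm_le_div_atTop K).comp tendsto_natCast_atTop_atTop using 2
    · simp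
    · exact dedekindZeta_residue_def K
  refine IsBigO.trans (IsBigO.of_bound 1 (Eventually.of_forall fun n => ?_)) hO
  rw [one_mul, Real.norm_of_nonneg (sum_nonneg fun _ _ => by positivity),
    Real.norm_of_nonneg (by positivity)]
  exact hle n

-- The zero ideal contributes `0 ^ (-σ) = 0`.
theorem summable_absNorm_rpow_neg {σ : ℝ} (hσ : 1 < σ) :
    Summable fun I : Ideal (𝓞 K) => (Ideal.absNorm I : ℝ) ^ (-σ) := by
  have hL : Summable fun n : ℕ =>
      (Nat.card {I : Ideal (𝓞 K) // Ideal.absNorm I = n} : ℝ) * (n : ℝ) ^ (-σ) := by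
    refine (LSeriesSummable_of_sum_norm_bigO_and_nonneg (isBigO_sum_card_absNorm_eq K)
      (fun _ => Nat.cast_nonneg _) zero_le_one (s := σ) (by simpa using hσ)).norm.congr
      fun n => ?_
    rw [LSeries.norm_term_eq]
    rcases eq_or_ne n 0 with rfl | hn
    · simp [Real.zero_rpow (neg_ne_zero.mpr (by linarith : σ ≠ 0))]
    · simp [hn, Real.rpow_neg (Nat.cast_nonneg n), div_eq_mul_inv]
  rw [← (Equiv.sigmaFiberEquiv Ideal.absNorm).summable_iff]
  refine (summable_sigma_of_nonneg fun _ => Real.rpow_nonneg (Nat.cast_nonneg _) _).mpr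
    ⟨fun n => ?_, hL.congr fun n => ?_⟩
  · have : Finite {I : Ideal (𝓞 K) // Ideal.absNorm I = n} := Ideal.finite_setOfPred_absNorm_eq n
    exact Summable.of_finite
  · simp only [Equiv.sigmaFiberEquiv_apply]
    rw [← nsmul_eq_mul, ← tsum_const]
    exact tsum_congr fun I => by rw [I.2]

end NumberField

/-- Bound for a sum over ideals contained in `𝔮` of `N(gcd(𝔪,𝔫,𝔠))^{1/2} N(𝔠)^{-3/2+δ}`. -/
theorem stmt_12 (F : Type*) [Field F] [NumberField F] (δ : ℝ) (hδ0 : 0 < δ) (hδ1 : δ < 1 / 2) :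
    ∃ C : ℝ, 0 < C ∧ ∀ q m n : Ideal (NumberField.RingOfIntegers F),
      q ≠ ⊥ → m ≠ ⊥ → n ≠ ⊥ →
      (∑' c : {c : Ideal (NumberField.RingOfIntegers F) // c ≤ q ∧ c ≠ ⊥},
          (Ideal.absNorm (m ⊔ n ⊔ (c : Ideal (NumberField.RingOfIntegers F))) : ℝ) ^ ((1 : ℝ) / 2) /
            (Ideal.absNorm (c : Ideal (NumberField.RingOfIntegers F)) : ℝ) ^ ((3 : ℝ) / 2 - δ)) ≤
        C * ((Ideal.absNorm (m ⊔ n ⊔ q) : ℝ) ^ ((1 : ℝ) / 2) /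
              (Ideal.absNorm q : ℝ) ^ ((3 : ℝ) / 2 - δ)) *
          (Ideal.absNorm (m ⊔ n) : ℝ) ^ δ := by
  obtain ⟨C, hC, hdiv⟩ :=
    Ideal.exists_tsum_dvd_absNorm_rpow_neg_le (S := 𝓞 F) (α := 1 - δ) (by linarith) hδ0
  have hζ := NumberField.summable_absNorm_rpow_neg F (σ := 3 / 2 - δ) (by linarith)
  have hZ : 0 < ∑' b : Ideal (𝓞 F), (Ideal.absNorm b : ℝ) ^ (-(3 / 2 - δ)) :=
    hζ.tsum_pos (fun _ => by positivity) ⊤ (by simp)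
  refine ⟨C * _, mul_pos hC hZ, fun q m n hq hm _ => ?_⟩
  have hg : m ⊔ n ≠ ⊥ := fun h => hm (sup_eq_bot_iff.mp h).1
  obtain ⟨hT, hTle⟩ := Ideal.summable_and_tsum_absNorm_sup_rpow_div_le hg (1 / 2) hζ
  rw [show (1 : ℝ) / 2 - (3 / 2 - δ) = -(1 - δ) by ring] at hTle
  calc _ ≤ _ := Ideal.tsum_le_absNorm_sup_rpow_div_mul_tsum hg hq (by norm_num) _ hT
    _ ≤ (Ideal.absNorm (m ⊔ n ⊔ q) : ℝ) ^ ((1 : ℝ) / 2) /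
          (Ideal.absNorm q : ℝ) ^ ((3 : ℝ) / 2 - δ) *
        (C * (Ideal.absNorm (m ⊔ n) : ℝ) ^ δ *
          ∑' b : Ideal (𝓞 F), (Ideal.absNorm b : ℝ) ^ (-(3 / 2 - δ))) := by
      gcongr
      exact hTle.trans (by gcongr; exact hdiv _ hg)
    _ = _ := by ring
end
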